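/- arXiv:math/0512193 — 4 statements merged into one kernel-verified Lean document; each statement's English description precedes it below -/
import Mathlib

section
/- Let e₁, …, eₙ (n ≥ 2) be a basis of ℝⁿ with Gram parameters ⟨eᵢ,eⱼ⟩, and consider the cross-polytope βₙ with vertices 0, eᵢ (1 ≤ i ≤ n-1), eₙ, and eₙ - eᵢ (1 ≤ i ≤ n-1), inscribed in a sphere of center c with 0 on the sphere. Then the circumscribing conditions 2⟨c, v⟩ = ‖v‖² for all vertices v are equivalent, beyond determining c, to exactly the n-1 independent linear relations ⟨eᵢ, eₙ⟩ = ‖eᵢ‖² for 1 ≤ i ≤ n-1 on the Gram matrix. Consequently rk(βₙ) = n(n+1)/2 - (n-1). -/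
open Matrix
/-- The space of symmetric Gram matrices satisfying the `n` cross-polytope relations
`⟨eᵢ, e_last⟩ = ‖eᵢ‖²` for `i ≠ last`. -/
def crossRelSpace (n : ℕ) : Submodule ℝ (Matrix (Fin (n + 1)) (Fin (n + 1)) ℝ) where
  carrier := {G | G.IsSymm ∧ ∀ i : Fin (n + 1), i ≠ Fin.last n → G i (Fin.last n) = G i i}
  add_mem' := by
    rintro A B ⟨hA, hA'⟩ ⟨hB, hB'⟩
    exact ⟨hA.add hB, fun i hi => by simp [Matrix.add_apply, hA' i hi, hB' i hi]⟩
  zero_mem' := ⟨by simp [Matrix.IsSymm], fun i _ => by simp⟩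
  smul_mem' := by
    rintro t A ⟨hA, hA'⟩
    exact ⟨hA.smul t, fun i hi => by simp [Matrix.smul_apply, hA' i hi]⟩

/-!
Write `⟨x, y⟩ = x ⬝ᵥ G *ᵥ y` and `e = e_last`. Once `c` satisfies `2⟨c, eᵢ⟩ = ‖eᵢ‖²` for every `i`
(possible since `G` is invertible), the condition at the vertex `e - eᵢ` reads
`‖e‖² - ‖eᵢ‖² = ‖e‖² - 2⟨eᵢ, e⟩ + ‖eᵢ‖²`, i.e. `⟨eᵢ, e⟩ = ‖eᵢ‖²`. The symmetric matrices obeying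
these `n` relations form the kernel of a linear map onto `ℝⁿ` from the symmetric
`(n + 1) × (n + 1)` matrices, a space of dimension `(n + 2).choose 2` by way of `Sym2`.
-/

namespace Matrix

variable {ι R K : Type*} [CommSemiring R] [Field K]

theorem IsSymm.dotProduct_mulVec_comm [Fintype ι] {G : Matrix ι ι R} (hG : G.IsSymm)
    (x y : ι → R) : y ⬝ᵥ G *ᵥ x = x ⬝ᵥ G *ᵥ y := by
  rw [dotProduct_mulVec, ← mulVec_transpose, hG.eq, dotProduct_comm]

theorem single_one_dotProduct_mulVec_single_one [Fintype ι] [DecidableEq ι] (G : Matrix ι ι R)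
    (i j : ι) : Pi.single i 1 ⬝ᵥ G *ᵥ Pi.single j 1 = G i j := by
  simp

theorem IsSymm.two_mul_dotProduct_mulVec_sub_iff [Fintype ι] [NeZero (2 : K)]
    {G : Matrix ι ι K} (hG : G.IsSymm) {c x y : ι → K} (hx : 2 * (c ⬝ᵥ G *ᵥ x) = x ⬝ᵥ G *ᵥ x)
    (hy : 2 * (c ⬝ᵥ G *ᵥ y) = y ⬝ᵥ G *ᵥ y) :
    2 * (c ⬝ᵥ G *ᵥ (y - x)) = (y - x) ⬝ᵥ G *ᵥ (y - x) ↔ x ⬝ᵥ G *ᵥ y = x ⬝ᵥ G *ᵥ x := by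
  simp only [mulVec_sub, dotProduct_sub, sub_dotProduct, mul_sub, hx, hy,
    hG.dotProduct_mulVec_comm x y]
  constructor <;> intro h
  · exact mul_left_cancel₀ (two_ne_zero (α := K)) (by linear_combination h)
  · linear_combination 2 * h

theorem IsSymm.two_mul_dotProduct_mulVec_single_sub_iff [Fintype ι] [DecidableEq ι]
    [NeZero (2 : K)] {G : Matrix ι ι K} (hG : G.IsSymm) {c : ι → K}
    (hc : ∀ i, 2 * (c ⬝ᵥ G *ᵥ Pi.single i 1) = G i i) (i j : ι) :
    2 * (c ⬝ᵥ G *ᵥ (Pi.single j 1 - Pi.single i 1)) =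
        (Pi.single j 1 - Pi.single i 1) ⬝ᵥ G *ᵥ (Pi.single j 1 - Pi.single i 1) ↔
      G i j = G i i := by
  simp_rw [← single_one_dotProduct_mulVec_single_one G] at hc ⊢
  exact hG.two_mul_dotProduct_mulVec_sub_iff (hc i) (hc j)

variable (ι R) in
def symmetricSubmodule : Submodule R (Matrix ι ι R) where
  carrier := {A | A.IsSymm}
  add_mem' := IsSymm.add
  zero_mem' := isSymm_zero
  smul_mem' c _ h := h.smul c

def symmetricSubmoduleEquivSym2 : symmetricSubmodule ι R ≃ₗ[R] (Sym2 ι → R) where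
  toFun A := Sym2.lift ⟨fun i j => A.1 i j, fun i j => A.2.apply j i⟩
  invFun f := ⟨of fun i j => f s(i, j), IsSymm.ext fun i j => by simp [Sym2.eq_swap]⟩
  map_add' A B := by ext s; induction s using Sym2.ind; simp
  map_smul' c A := by ext s; induction s using Sym2.ind; simp
  left_inv A := by ext i j; simp
  right_inv f := by ext s; induction s using Sym2.ind; simp

theorem finrank_symmetricSubmodule [Fintype ι] [DecidableEq ι] :
    Module.finrank K (symmetricSubmodule ι K) = (Fintype.card ι + 1).choose 2 := by
  rw [symmetricSubmoduleEquivSym2.finrank_eq, Module.finrank_fintype_fun_eq_card, Sym2.card]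

end Matrix

theorem Submodule.finrank_inf_ker_add_finrank {K V W : Type*} [DivisionRing K] [AddCommGroup V]
    [Module K V] [AddCommGroup W] [Module K W] [FiniteDimensional K V] (p : Submodule K V)
    (f : V →ₗ[K] W) (hf : p.map f = ⊤) :
    Module.finrank K ↥(p ⊓ LinearMap.ker f) + Module.finrank K W = Module.finrank K p := by
  rw [← p.map_comap_subtype, Submodule.finrank_map_subtype_eq, ← LinearMap.ker_domRestrict,
    ← finrank_top K W, ← hf, ← LinearMap.range_domRestrict, add_comm]
  exact LinearMap.finrank_range_add_finrank_ker _

open Matrix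

def crossRelMap (n : ℕ) : Matrix (Fin (n + 1)) (Fin (n + 1)) ℝ →ₗ[ℝ] (Fin n → ℝ) where
  toFun G i := G i.castSucc (Fin.last n) - G i.castSucc i.castSucc
  map_add' A B := by ext i; simp only [Matrix.add_apply, Pi.add_apply]; ring
  map_smul' t A := by
    ext i
    simp only [Matrix.smul_apply, smul_eq_mul, Pi.smul_apply, RingHom.id_apply]
    ring

theorem crossRelSpace_eq (n : ℕ) :
    crossRelSpace n = symmetricSubmodule (Fin (n + 1)) ℝ ⊓ LinearMap.ker (crossRelMap n) := by
  ext G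
  simp [crossRelSpace, symmetricSubmodule, crossRelMap, funext_iff, sub_eq_zero,
    Fin.forall_fin_succ']

theorem map_crossRelMap_symmetricSubmodule (n : ℕ) :
    (symmetricSubmodule (Fin (n + 1)) ℝ).map (crossRelMap n) = ⊤ := by
  refine eq_top_iff.mpr fun v _ => ?_
  -- Since `w (last n) = 0`, the relation vector of `w a + w b` is `-w ∘ castSucc`.
  let w : Fin (n + 1) → ℝ := Fin.snoc (-v) 0
  refine ⟨of fun a b => w a + w b, IsSymm.ext fun a b => add_comm _ _, ?_⟩
  ext i
  simp [crossRelMap, w]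

theorem finrank_crossRelSpace (n : ℕ) :
    Module.finrank ℝ (crossRelSpace n) = (n + 1) * (n + 2) / 2 - n := by
  have h := (symmetricSubmodule (Fin (n + 1)) ℝ).finrank_inf_ker_add_finrank (crossRelMap n)
    (map_crossRelMap_symmetricSubmodule n)
  rw [← crossRelSpace_eq, finrank_symmetricSubmodule, Module.finrank_fin_fun, Fintype.card_fin,
    Nat.choose_two_right, Nat.add_sub_cancel, mul_comm, show n + 1 + 1 = n + 2 from rfl] at h
  omega

theorem stmt_12_general (n : ℕ) :
    (∀ G : Matrix (Fin (n + 1)) (Fin (n + 1)) ℝ, G.IsSymm → G.PosDef →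
      ((∃ c : Fin (n + 1) → ℝ,
          (∀ i : Fin (n + 1),
            2 * (c ⬝ᵥ G.mulVec (Pi.single i 1)) =
              (Pi.single i 1 : Fin (n + 1) → ℝ) ⬝ᵥ G.mulVec (Pi.single i 1)) ∧
          (∀ i : Fin (n + 1), i ≠ Fin.last n →
            2 * (c ⬝ᵥ G.mulVec (Pi.single (Fin.last n) 1 - Pi.single i 1)) =
              (Pi.single (Fin.last n) 1 - Pi.single i 1 : Fin (n + 1) → ℝ) ⬝ᵥ
                G.mulVec (Pi.single (Fin.last n) 1 - Pi.single i 1))) ↔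
        (∀ i : Fin (n + 1), i ≠ Fin.last n → G i (Fin.last n) = G i i))) ∧
    Module.finrank ℝ (crossRelSpace n) = (n + 1) * (n + 2) / 2 - n := by
  refine ⟨fun G hG hpos => ?_, finrank_crossRelSpace n⟩
  simp only [single_one_dotProduct_mulVec_single_one]
  constructor
  · rintro ⟨c, hvert, hdiff⟩ i hi
    exact (hG.two_mul_dotProduct_mulVec_single_sub_iff hvert i _).mp (hdiff i hi)
  · intro hrel
    obtain ⟨c, hc : c ᵥ* G = fun i => G i i / 2⟩ :=
      vecMul_surjective_iff_isUnit.mpr hpos.isUnit fun i => G i i / 2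
    have hvert : ∀ i, 2 * (c ⬝ᵥ G *ᵥ Pi.single i 1) = G i i := fun i => by
      rw [dotProduct_mulVec, hc, dotProduct_single, mul_one]
      ring
    exact ⟨c, hvert, fun i hi =>
      (hG.two_mul_dotProduct_mulVec_single_sub_iff hvert i _).mpr (hrel i hi)⟩

/-- The cross-polytope `βₙ₊₁` has vertices `0`, `eᵢ` (`i ≠ last`), `e_last` and
`e_last - eᵢ` (`i ≠ last`), in coordinates w.r.t. the basis `e₁, …, e_{n+1}`; the Gram
matrix `G` records the inner products `⟨eᵢ, eⱼ⟩`.  The circumscribing conditions are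
equivalent to the `n` relations `G i last = G i i`, and the resulting space of Gram
matrices has dimension `(n+1)(n+2)/2 - n`. -/
theorem stmt_12 (n : ℕ) (hn : 1 ≤ n) :
    (∀ G : Matrix (Fin (n + 1)) (Fin (n + 1)) ℝ, G.IsSymm → G.PosDef →
      ((∃ c : Fin (n + 1) → ℝ,
          (∀ i : Fin (n + 1),
            2 * (c ⬝ᵥ G.mulVec (Pi.single i 1)) =
              (Pi.single i 1 : Fin (n + 1) → ℝ) ⬝ᵥ G.mulVec (Pi.single i 1)) ∧
          (∀ i : Fin (n + 1), i ≠ Fin.last n →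
            2 * (c ⬝ᵥ G.mulVec (Pi.single (Fin.last n) 1 - Pi.single i 1)) =
              (Pi.single (Fin.last n) 1 - Pi.single i 1 : Fin (n + 1) → ℝ) ⬝ᵥ
                G.mulVec (Pi.single (Fin.last n) 1 - Pi.single i 1))) ↔
        (∀ i : Fin (n + 1), i ≠ Fin.last n → G i (Fin.last n) = G i i))) ∧
    Module.finrank ℝ (crossRelSpace n) = (n + 1) * (n + 2) / 2 - n :=
  stmt_12_general n
end

section
/- Let e₁, …, eₙ ∈ ℝⁿ with n ≥ 5 satisfy: for every pair of disjoint even-cardinality subsets T₁, T₂ of {1,…,n}, ⟨e(T₁), e(T₂)⟩ = 0, where e(T) = ∑_{i∈T} eᵢ. Then ⟨eᵢ, eⱼ⟩ = 0 for all i ≠ j. -/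
open RealInnerProductSpace

theorem stmt_14 (n : ℕ) (hn : 5 ≤ n)
    (e : Fin n → EuclideanSpace ℝ (Fin n))
    (h : ∀ T₁ T₂ : Finset (Fin n), Even T₁.card → Even T₂.card → Disjoint T₁ T₂ →
      ⟪∑ i ∈ T₁, e i, ∑ i ∈ T₂, e i⟫ = 0) :
    ∀ i j : Fin n, i ≠ j → ⟪e i, e j⟫ = 0 := by
  -- key lemma: for four distinct indices, ⟪e a, e b⟫ = -⟪e c, e d⟫
  have key : ∀ a b c d : Fin n, a ≠ b → a ≠ c → a ≠ d → b ≠ c → b ≠ d → c ≠ d →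
      ⟪e a, e b⟫ = -⟪e c, e d⟫ := by
    intro a b c d hab hac had hbc hbd hcd
    have pairh : ∀ x y z w : Fin n, x ≠ y → z ≠ w →
        x ≠ z → x ≠ w → y ≠ z → y ≠ w →
        ⟪e x, e z⟫ + ⟪e x, e w⟫ + ⟪e y, e z⟫ + ⟪e y, e w⟫ = 0 := by
      intro x y z w hxy hzw hxz hxw hyz hyw
      have := h {x, y} {z, w} ?_ ?_ ?_
      · rw [Finset.sum_pair hxy, Finset.sum_pair hzw, inner_add_left,
          inner_add_right, inner_add_right] at this
        linarith
      · simp [Finset.card_pair hxy]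
      · simp [Finset.card_pair hzw]
      · simp [Finset.disjoint_left, hxz, hxw, hyz, hyw]
    have h1 := pairh a b c d hab hcd hac had hbc hbd
    have h2 := pairh a c b d hac hbd hab had hbc.symm hcd
    have h3 := pairh a d b c had hbc hab hac hbd.symm hcd.symm
    have c1 : ⟪e c, e b⟫ = ⟪e b, e c⟫ := real_inner_comm _ _
    have c2 : ⟪e d, e b⟫ = ⟪e b, e d⟫ := real_inner_comm _ _
    have c3 : ⟪e d, e c⟫ = ⟪e c, e d⟫ := real_inner_comm _ _
    linarith
  intro i j hij
  -- find three more distinct indices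
  have hcard : 3 ≤ (Finset.univ \ {i, j} : Finset (Fin n)).card := by
    have h2 : ({i, j} : Finset (Fin n)).card ≤ 2 := Finset.card_insert_le _ _ |>.trans (by simp)
    have := Finset.card_sdiff_of_subset (Finset.subset_univ ({i, j} : Finset (Fin n)))
    simp only [Finset.card_univ, Fintype.card_fin] at this
    omega
  obtain ⟨s, hs, hscard⟩ := Finset.exists_subset_card_eq hcard
  obtain ⟨k, l, m, hkl, hkm, hlm, rfl⟩ := Finset.card_eq_three.mp hscard
  have hk : k ∈ Finset.univ \ ({i, j} : Finset (Fin n)) := hs (by simp)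
  have hl : l ∈ Finset.univ \ ({i, j} : Finset (Fin n)) := hs (by simp)
  have hm : m ∈ Finset.univ \ ({i, j} : Finset (Fin n)) := hs (by simp)
  simp only [Finset.mem_sdiff, Finset.mem_univ, Finset.mem_insert, Finset.mem_singleton,
    true_and, not_or] at hk hl hm
  obtain ⟨hki, hkj⟩ := hk
  obtain ⟨hli, hlj⟩ := hl
  obtain ⟨hmi, hmj⟩ := hm
  -- x_ij = -x_lm, x_ik = -x_lm so x_ij = x_ik
  have e1 : ⟪e i, e j⟫ = -⟪e l, e m⟫ := key i j l m hij (Ne.symm hli) (Ne.symm hmi) (Ne.symm hlj) (Ne.symm hmj) hlm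
  have e2 : ⟪e i, e k⟫ = -⟪e l, e m⟫ := key i k l m (Ne.symm hki) (Ne.symm hli) (Ne.symm hmi) hkl hkm hlm
  -- x_ij = -x_km, x_jl = -x_km so x_ij = x_jl ; x_jl = -x_ik
  have e3 : ⟪e i, e j⟫ = -⟪e k, e m⟫ := key i j k m hij (Ne.symm hki) (Ne.symm hmi) (Ne.symm hkj) (Ne.symm hmj) hkm
  have e4 : ⟪e j, e l⟫ = -⟪e k, e m⟫ := key j l k m (Ne.symm hlj) (Ne.symm hkj) (Ne.symm hmj) (Ne.symm hkl) hlm hkm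
  have e5 : ⟪e j, e l⟫ = -⟪e i, e k⟫ := key j l i k (Ne.symm hlj) (Ne.symm hij) (Ne.symm hkj) hli (Ne.symm hkl) (Ne.symm hki)
  linarith
end

section
/- Consider 14 points partitioned into four sets Σ₁², Σ₂² (3 points each) and Σ₁³, Σ₂³ (4 points each), with distance function d given by: d(u,v) = 7 if u ≠ v lie in the same set; d(u,v) = 6 if u ∈ Σᵢ², v ∈ Σᵢ³ (same index i); d(u,v) = 10 if u ∈ Σ₁², v ∈ Σ₂²; d(u,v) = 12 if u ∈ Σ₁³, v ∈ Σ₂³, or u ∈ Σ₁², v ∈ Σ₂³, or u ∈ Σ₂², v ∈ Σ₁³. Define y(v) = 3 for v ∈ Σ₁², -3 for v ∈ Σ₂², 2 for v ∈ Σ₂³, -2 for v ∈ Σ₁³. Then ∑_{v} y(v) = 0 and for every u in the 14-point set, ∑_{v} y(v) d(u,v) = 0. -/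
lemma sum_const_val {V : Type*} [DecidableEq V] (S : Finset V) (f : V → ℝ) (c : ℝ)
    (h : ∀ v ∈ S, f v = c) : ∑ v ∈ S, f v = S.card * c := by
  rw [Finset.sum_congr rfl h, Finset.sum_const, nsmul_eq_mul]

lemma sum_diag_val {V : Type*} [DecidableEq V] (S : Finset V) (f : V → ℝ) (c : ℝ)
    (u : V) (hu : u ∈ S) (h0 : f u = 0)
    (h : ∀ v ∈ S, v ≠ u → f v = c) : ∑ v ∈ S, f v = (S.card - 1) * c := by
  rw [← Finset.add_sum_erase _ f hu, h0, zero_add,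
    Finset.sum_congr rfl (fun v hv => h v (Finset.mem_erase.mp hv).2 (Finset.mem_erase.mp hv).1),
    Finset.sum_const, Finset.card_erase_of_mem hu, nsmul_eq_mul,
    Nat.cast_sub (Finset.one_le_card.mpr ⟨u, hu⟩), Nat.cast_one]

theorem stmt_16 (V : Type*) [Fintype V] [DecidableEq V]
    (A1 A2 B1 B2 : Finset V)
    (hA1 : A1.card = 3) (hA2 : A2.card = 3) (hB1 : B1.card = 4) (hB2 : B2.card = 4)
    (hd12 : Disjoint A1 A2) (hd13 : Disjoint A1 B1) (hd14 : Disjoint A1 B2)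
    (hd23 : Disjoint A2 B1) (hd24 : Disjoint A2 B2) (hd34 : Disjoint B1 B2)
    (hcover : A1 ∪ A2 ∪ B1 ∪ B2 = Finset.univ)
    (d : V → V → ℝ)
    (hsymm : ∀ u v, d u v = d v u)
    (hdiag : ∀ v, d v v = 0)
    (hsame : ∀ S ∈ [A1, A2, B1, B2], ∀ u ∈ S, ∀ v ∈ S, u ≠ v → d u v = 7)
    (h6a : ∀ u ∈ A1, ∀ v ∈ B1, d u v = 6)
    (h6b : ∀ u ∈ A2, ∀ v ∈ B2, d u v = 6)
    (h10 : ∀ u ∈ A1, ∀ v ∈ A2, d u v = 10)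
    (h12a : ∀ u ∈ B1, ∀ v ∈ B2, d u v = 12)
    (h12b : ∀ u ∈ A1, ∀ v ∈ B2, d u v = 12)
    (h12c : ∀ u ∈ A2, ∀ v ∈ B1, d u v = 12)
    (y : V → ℝ)
    (hy : ∀ v, y v = if v ∈ A1 then 3 else if v ∈ A2 then -3
      else if v ∈ B2 then 2 else -2) :
    (∑ v, y v = 0) ∧ ∀ u, ∑ v, y v * d u v = 0 := by
  have split : ∀ f : V → ℝ, ∑ v, f v =
      ∑ v ∈ A1, f v + ∑ v ∈ A2, f v + ∑ v ∈ B1, f v + ∑ v ∈ B2, f v := by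
    intro f
    rw [← hcover,
      Finset.sum_union (by simp [Finset.disjoint_union_left, hd14, hd24, hd34]),
      Finset.sum_union (by simp [Finset.disjoint_union_left, hd13, hd23]),
      Finset.sum_union hd12]
  have yA1 : ∀ v ∈ A1, y v = 3 := fun v hv => by rw [hy, if_pos hv]
  have yA2 : ∀ v ∈ A2, y v = -3 := fun v hv => by
    rw [hy, if_neg (Finset.disjoint_right.mp hd12 hv), if_pos hv]
  have yB1 : ∀ v ∈ B1, y v = -2 := fun v hv => by
    rw [hy, if_neg (Finset.disjoint_right.mp hd13 hv),
      if_neg (Finset.disjoint_right.mp hd23 hv),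
      if_neg (Finset.disjoint_right.mp hd34.symm hv)]
  have yB2 : ∀ v ∈ B2, y v = 2 := fun v hv => by
    rw [hy, if_neg (Finset.disjoint_right.mp hd14 hv),
      if_neg (Finset.disjoint_right.mp hd24 hv), if_pos hv]
  constructor
  · rw [split y, sum_const_val A1 y 3 yA1, sum_const_val A2 y (-3) yA2,
      sum_const_val B1 y (-2) yB1, sum_const_val B2 y 2 yB2, hA1, hA2, hB1, hB2]
    norm_num
  · intro u
    have hu : u ∈ A1 ∪ A2 ∪ B1 ∪ B2 := hcover ▸ Finset.mem_univ u
    simp only [Finset.mem_union] at hu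
    have hmA1 : A1 ∈ [A1, A2, B1, B2] := by simp
    have hmA2 : A2 ∈ [A1, A2, B1, B2] := by simp
    have hmB1 : B1 ∈ [A1, A2, B1, B2] := by simp
    have hmB2 : B2 ∈ [A1, A2, B1, B2] := by simp
    rw [split (fun v => y v * d u v)]
    rcases hu with ((hu | hu) | hu) | hu
    · rw [sum_diag_val A1 _ 21 u hu (by simp [hdiag])
          (fun v hv hne => by rw [yA1 v hv, hsame A1 hmA1 u hu v hv (Ne.symm hne)]; ring),
        sum_const_val A2 _ (-30) (fun v hv => by rw [yA2 v hv, h10 u hu v hv]; ring),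
        sum_const_val B1 _ (-12) (fun v hv => by rw [yB1 v hv, h6a u hu v hv]; ring),
        sum_const_val B2 _ 24 (fun v hv => by rw [yB2 v hv, h12b u hu v hv]; ring),
        hA1, hA2, hB1, hB2]
      norm_num
    · rw [sum_const_val A1 _ 30 (fun v hv => by rw [yA1 v hv, hsymm, h10 v hv u hu]; ring),
        sum_diag_val A2 _ (-21) u hu (by simp [hdiag])
          (fun v hv hne => by rw [yA2 v hv, hsame A2 hmA2 u hu v hv (Ne.symm hne)]; ring),
        sum_const_val B1 _ (-24) (fun v hv => by rw [yB1 v hv, h12c u hu v hv]; ring),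
        sum_const_val B2 _ 12 (fun v hv => by rw [yB2 v hv, h6b u hu v hv]; ring),
        hA1, hA2, hB1, hB2]
      norm_num
    · rw [sum_const_val A1 _ 18 (fun v hv => by rw [yA1 v hv, hsymm, h6a v hv u hu]; ring),
        sum_const_val A2 _ (-36) (fun v hv => by rw [yA2 v hv, hsymm, h12c v hv u hu]; ring),
        sum_diag_val B1 _ (-14) u hu (by simp [hdiag])
          (fun v hv hne => by rw [yB1 v hv, hsame B1 hmB1 u hu v hv (Ne.symm hne)]; ring),
        sum_const_val B2 _ 24 (fun v hv => by rw [yB2 v hv, h12a u hu v hv]; ring),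
        hA1, hA2, hB1, hB2]
      norm_num
    · rw [sum_const_val A1 _ 36 (fun v hv => by rw [yA1 v hv, hsymm, h12b v hv u hu]; ring),
        sum_const_val A2 _ (-18) (fun v hv => by rw [yA2 v hv, hsymm, h6b v hv u hu]; ring),
        sum_const_val B1 _ (-24) (fun v hv => by rw [yB1 v hv, hsymm, h12a v hv u hu]; ring),
        sum_diag_val B2 _ 14 u hu (by simp [hdiag])
          (fun v hv hne => by rw [yB2 v hv, hsame B2 hmB2 u hu v hv (Ne.symm hne)]; ring),
        hA1, hA2, hB1, hB2]
      norm_num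
end

section
/- Let V = {v₀, v₁, …, vₙ, w} be n+2 points in ℝⁿ on a common sphere such that v₀,…,vₙ are affinely independent, and suppose y(w)·(w - v₀) + ∑_{i=1}^n y(vᵢ)·(vᵢ - v₀) = 0 with y(w) ≠ 0, is (up to scalar) the unique affine dependency. If there exists an index i with y(vᵢ)/y(w) ∉ ℤ for every possible choice of which point plays the role of w (i.e., for every u ∈ V, writing the unique dependency with u removed from the basis, some coefficient ratio is non-integral), then V admits no ℤ-affine basis: no subset V₀ ⊆ V of n+1 points such that every point of V is an integer affine combination of V₀. -/
open RealInnerProductSpace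

theorem stmt_18 (n : ℕ) (c : EuclideanSpace ℝ (Fin n)) (r : ℝ)
    (v : Fin (n + 2) → EuclideanSpace ℝ (Fin n))
    (hinj : Function.Injective v)
    (hsphere : ∀ k, ‖v k - c‖ ^ 2 = r ^ 2)
    (haff : AffineIndependent ℝ (fun i : Fin (n + 1) => v i.castSucc))
    (y : Fin (n + 2) → ℝ) (hy : y ≠ 0)
    (hy0 : ∑ k, y k = 0)
    (hydep : ∑ k, y k • v k = 0)
    (huniq : ∀ y' : Fin (n + 2) → ℝ,
      (∑ k, y' k = 0) → (∑ k, y' k • v k = 0) → ∃ t : ℝ, y' = t • y)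
    (hnonint : ∀ u : Fin (n + 2), ∃ i : Fin (n + 2), ¬ ∃ m : ℤ, y i = (m : ℝ) * y u) :
    ¬ ∃ S : Finset (Fin (n + 2)), S.card = n + 1 ∧
      ∀ w : Fin (n + 2), ∃ z : Fin (n + 2) → ℤ,
        (∑ k ∈ S, (z k : ℝ)) = 1 ∧ (∑ k ∈ S, (z k : ℝ) • v k) = v w := by
  rintro ⟨S, hScard, hZ⟩
  have hcompl : Sᶜ.card = 1 := by
    simp [Finset.card_compl, hScard]
  obtain ⟨u, hu⟩ := Finset.card_eq_one.mp hcompl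
  have huS : u ∉ S := by
    have : u ∈ Sᶜ := hu ▸ Finset.mem_singleton_self u
    simpa using this
  obtain ⟨z, hz1, hz2⟩ := hZ u
  set y' : Fin (n + 2) → ℝ := fun k => if k ∈ S then (z k : ℝ) else -1 with hy'def
  have hsumS : ∑ k ∈ S, y' k = 1 := by
    have : ∑ k ∈ S, y' k = ∑ k ∈ S, ((z k : ℝ)) :=
      Finset.sum_congr rfl (fun k hk => by simp [hy'def, hk])
    rw [this]; exact hz1
  have hsumSc : ∑ k ∈ Sᶜ, y' k = -1 := by
    rw [hu, Finset.sum_singleton]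
    simp [hy'def, huS]
  have hsum : ∑ k, y' k = 0 := by
    rw [← Finset.sum_add_sum_compl S, hsumS, hsumSc]
    ring
  have hvecS : ∑ k ∈ S, y' k • v k = v u := by
    have : ∑ k ∈ S, y' k • v k = ∑ k ∈ S, ((z k : ℝ)) • v k :=
      Finset.sum_congr rfl (fun k hk => by simp [hy'def, hk])
    rw [this]; exact hz2
  have hvec : ∑ k, y' k • v k = 0 := by
    rw [← Finset.sum_add_sum_compl S, hvecS, hu, Finset.sum_singleton]
    simp [hy'def, huS]
  obtain ⟨t, ht⟩ := huniq y' hsum hvec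
  have htu : t * y u = -1 := by
    have := congrFun ht u
    simp [hy'def, huS] at this
    linarith [this]
  have htne : t ≠ 0 := by
    intro h
    rw [h, zero_mul] at htu
    norm_num at htu
  obtain ⟨i, hi⟩ := hnonint u
  apply hi
  by_cases hiS : i ∈ S
  · refine ⟨-z i, ?_⟩
    have hti : t * y i = z i := by
      have := congrFun ht i
      simp [hy'def, hiS] at this
      linarith [this]
    have : t * y i = t * (((-z i : ℤ) : ℝ) * y u) := by
      push_cast
      rw [hti]
      linear_combination (z i : ℝ) * htu
    exact mul_left_cancel₀ htne this
  · have : i = u := by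
      have : i ∈ Sᶜ := Finset.mem_compl.mpr hiS
      rw [hu] at this
      simpa using this
    subst this
    exact ⟨1, by simp⟩
end
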